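/- arXiv:2108.12895 — 6 statements merged into one kernel-verified Lean document; each statement's English description precedes it below -/
import Mathlib

section
/- Let V = ℚ[X] with basis (X^i)_{i≥0} and let σ₊(z): ⋀V → ⋀V⟦z⟧ be the unique Hasse–Schmidt derivation (i.e. σ₊(z)(u∧v) = σ₊(z)u ∧ σ₊(z)v) whose restriction to V satisfies σ₊(z)X^j = ∑_{i≥0} X^{j+i} z^i. Then for any formal variable t and any r ≥ 2, σ₊(t)(X^{r-1} ∧ X^{r-2} ∧ ⋯ ∧ X^0) = (σ₊(t)X^{r-1}) ∧ X^{r-2} ∧ ⋯ ∧ X^0. -/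
noncomputable section

/-- `V = ℚ[X]` as the free ℚ-module with basis `(X^i)_{i ≥ 0}`. -/
abbrev V : Type := ℕ →₀ ℚ

/-- The basis vector `X^i`, viewed inside the exterior algebra `⋀V`. -/
def Xp (i : ℕ) : ExteriorAlgebra ℚ V := ExteriorAlgebra.ι ℚ (Finsupp.single i 1)

/-- `X^r(0) = X^{r-1} ∧ X^{r-2} ∧ ⋯ ∧ X^0`. -/
def Wd (r : ℕ) : ExteriorAlgebra ℚ V := (((List.range r).reverse).map Xp).prod

/-!
Since `σ₊(t)X^s = X^s + t·σ₊(t)X^{s+1}` and `(σ₊(t)X^{s+1})² = σ₊(t)(X^{s+1} ∧ X^{s+1}) = 0`,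
one gets `σ₊(t)X^{s+1} ∧ σ₊(t)X^s = σ₊(t)X^{s+1} ∧ X^s`. Applying this to adjacent factors from
the left, the factors `σ₊(t)X^{r-2}, …, σ₊(t)X^0` collapse one at a time to `X^{r-2}, …, X^0`.
-/

theorem List.prod_map_reverse_range_succ {M : Type*} [Monoid M] (x : ℕ → M) (r : ℕ) :
    ((List.range (r + 1)).reverse.map x).prod = x r * ((List.range r).reverse.map x).prod := by
  simp [List.range_succ]

theorem RingHom.map_prod_reverse_range_succ {A B : Type*} [Semiring A] [Semiring B]
    (σ c : A →+* B) (x : ℕ → A)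
    (hx : ∀ s, σ (x (s + 1)) * σ (x s) = σ (x (s + 1)) * c (x s)) (r : ℕ) :
    σ (((List.range (r + 1)).reverse.map x).prod) =
      σ (x r) * c (((List.range r).reverse.map x).prod) := by
  induction r with
  | zero => simp
  | succ r ih =>
    rw [List.prod_map_reverse_range_succ x (r + 1), map_mul, ih, ← mul_assoc, hx, mul_assoc,
      ← map_mul, ← List.prod_map_reverse_range_succ]

namespace PowerSeries

theorem mul_eq_mul_C_of_eq_C_add_X_mul {A : Type*} [Semiring A] {f g : A⟦X⟧} {a : A}
    (hf : f * f = 0) (hg : g = C a + X * f) : f * g = f * C a := by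
  rw [hg, mul_add, (commute_X f).left_comm, hf, mul_zero, add_zero]

theorem mk_eq_C_add_X_mul_mk {A : Type*} [Semiring A] (u : ℕ → A) :
    mk u = C (u 0) + X * mk fun i => u (i + 1) := by
  ext (_ | n) <;> simp [coeff_succ_X_mul]

end PowerSeries

theorem Xp_mul_self (i : ℕ) : Xp i * Xp i = 0 :=
  ExteriorAlgebra.ι_sq_zero _

/-- If `σ₊(z)` is a Hasse–Schmidt derivation on `⋀V` (a multiplicative, i.e. ring-hom,
map into `(⋀V)⟦z⟧`) restricting to `V` by `σ₊(z)X^j = ∑_{i≥0} X^{j+i} z^i`, then for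
all `r ≥ 2`, `σ₊(t)(X^{r-1} ∧ ⋯ ∧ X^0) = (σ₊(t)X^{r-1}) ∧ X^{r-2} ∧ ⋯ ∧ X^0`. -/
theorem sigma_plus_wedge (r : ℕ) (hr : 2 ≤ r)
    (σ : ExteriorAlgebra ℚ V →+* PowerSeries (ExteriorAlgebra ℚ V))
    (hσ : ∀ j, σ (Xp j) = PowerSeries.mk fun i => Xp (j + i)) :
    σ (Wd r) = σ (Xp (r - 1)) * PowerSeries.C (Wd (r - 1)) := by
  have hstep (s : ℕ) : σ (Xp (s + 1)) * σ (Xp s) = σ (Xp (s + 1)) * PowerSeries.C (Xp s) := by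
    refine PowerSeries.mul_eq_mul_C_of_eq_C_add_X_mul (by rw [← map_mul, Xp_mul_self, map_zero]) ?_
    rw [hσ, hσ, PowerSeries.mk_eq_C_add_X_mul_mk]
    simp only [add_zero, add_assoc, add_comm 1]
  obtain ⟨k, rfl⟩ := Nat.exists_eq_add_of_le' (Nat.one_le_of_lt hr)
  exact σ.map_prod_reverse_range_succ PowerSeries.C Xp hstep k
end
end

section
/- With σ₊(t)X^j = ∑_{i≥0} X^{j+i}t^i and σ̄₊(t)X^j = X^j − tX^{j+1} extended as Hasse–Schmidt derivations to ⋀ℚ[X], the operators σ₊(t) and σ̄₊(t) are mutually inverse in End(⋀ℚ[X])⟦t⟧. -/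
noncomputable section

/-!
Extending a map `φ : R →+* S⟦t⟧` `t`-linearly, `∑ fₙ tⁿ ↦ ∑ φ(fₙ) tⁿ`, gives a ring homomorphism
`R⟦t⟧ →+* S⟦t⟧`, and the composite series of the statement are the coefficients of
`(linearExtend σ) ∘ τ` and `(linearExtend τ) ∘ σ`. Both are ring homomorphisms out of `⋀V`, so it
suffices that they agree with the constant embedding `C` on the generators `X^j`. There
`σ₊(t)X^j = X^j + t σ₊(t)X^{j+1}` and `σ̄₊(t)X^j = X^j - t X^{j+1}`; the first composite then
returns `X^j` at once, while for the second the defect `g_j` satisfies `g_j = t g_{j+1}`, so it is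
divisible by every power of `t` and vanishes.
-/

open PowerSeries Finset

theorem Finset.Nat.sum_antidiagonal_ite_snd {M : Type*} [AddCommMonoid M] (F : ℕ × ℕ → M)
    (k n : ℕ) :
    ∑ x ∈ antidiagonal n, (if x.2 = k then F x else 0) = if k ≤ n then F (n - k, k) else 0 := by
  rw [← sum_filter, HasAntidiagonal.filter_snd_eq_antidiagonal n k]
  split_ifs <;> simp

namespace PowerSeries

variable {R S : Type*} [Semiring R] [Semiring S]

def linearExtend (φ : R →+* S⟦X⟧) : R⟦X⟧ →+* S⟦X⟧ where
  toFun f := mk fun n => ∑ p ∈ antidiagonal n, coeff p.1 (φ (coeff p.2 f))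
  map_zero' := by ext; simp
  map_add' f g := by ext; simp [sum_add_distrib]
  map_one' := by
    ext n
    simp [coeff_one, apply_ite φ, apply_ite (coeff _), Nat.sum_antidiagonal_ite_snd]
  map_mul' f g := by
    ext n
    simp only [coeff_mk, coeff_mul, map_sum, map_mul, sum_mul_sum, sum_sigma']
    apply sum_nbij' (fun ⟨_, ⟨a, b⟩, ⟨c, d⟩⟩ ↦ ⟨(c + a, d + b), (c, a), (d, b)⟩)
      (fun ⟨_, ⟨c, a⟩, ⟨d, b⟩⟩ ↦ ⟨(c + d, a + b), (a, b), (c, d)⟩) <;>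
      aesop (add simp [add_assoc, add_left_comm])

theorem coeff_linearExtend (φ : R →+* S⟦X⟧) (f : R⟦X⟧) (n : ℕ) :
    coeff n (linearExtend φ f) = ∑ p ∈ antidiagonal n, coeff p.1 (φ (coeff p.2 f)) := by
  simp [linearExtend]

theorem linearExtend_monomial (φ : R →+* S⟦X⟧) (k : ℕ) (a : R) :
    linearExtend φ (monomial k a) = X ^ k * φ a := by
  ext n
  simp only [coeff_linearExtend, coeff_monomial, coeff_X_pow_mul', apply_ite φ,
    apply_ite (coeff _), map_zero, Nat.sum_antidiagonal_ite_snd]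

theorem linearExtend_C (φ : R →+* S⟦X⟧) (a : R) : linearExtend φ (C a) = φ a := by
  simpa using linearExtend_monomial φ 0 a

theorem linearExtend_X (φ : R →+* S⟦X⟧) : linearExtend φ X = X := by
  simpa [← X_eq] using linearExtend_monomial φ 1 1

theorem eq_zero_of_eq_X_mul_succ {g : ℕ → R⟦X⟧} (hg : ∀ j, g j = X * g (j + 1)) (j : ℕ) :
    g j = 0 := by
  refine ext fun n => ?_
  rw [map_zero]
  induction n generalizing j with
  | zero => rw [hg, coeff_zero_X_mul]
  | succ n ih => rw [hg, coeff_succ_X_mul, ih]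

end PowerSeries

theorem ExteriorAlgebra.ringHom_ext_Xp {A : Type*} [Ring A] [Algebra ℚ A]
    {f g : ExteriorAlgebra ℚ V →+* A} (h : ∀ j, f (Xp j) = g (Xp j)) : f = g := by
  have : f.toRatAlgHom = g.toRatAlgHom :=
    hom_ext <| Finsupp.lhom_ext' fun j => LinearMap.ext_ring (h j)
  exact RingHom.ext (AlgHom.congr_fun this)

/-- If `σ = σ₊(t)` and `τ = σ̄₊(t)` are the Hasse–Schmidt derivations on `⋀V`
(multiplicative maps `⋀V → (⋀V)⟦t⟧`) with `σ₊(t)X^j = ∑_{i≥0} X^{j+i}t^i` and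
`σ̄₊(t)X^j = X^j − t X^{j+1}`, then they are mutually inverse in `End(⋀V)⟦t⟧`:
for every `u` the coefficient of `t^n` in either composite series
`∑_{i+j=n} σ_i(τ_j u)` is `u` for `n = 0` and `0` for `n > 0`. -/
theorem sigma_sbar_mutually_inverse
    (σ τ : ExteriorAlgebra ℚ V →+* PowerSeries (ExteriorAlgebra ℚ V))
    (hσ : ∀ j, σ (Xp j) = PowerSeries.mk fun i => Xp (j + i))
    (hτ : ∀ j, τ (Xp j) =
      PowerSeries.mk fun i => if i = 0 then Xp j else if i = 1 then -Xp (j + 1) else 0) :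
    (∀ u : ExteriorAlgebra ℚ V, ∀ n : ℕ,
        ∑ p ∈ Finset.HasAntidiagonal.antidiagonal n,
          PowerSeries.coeff p.1 (σ (PowerSeries.coeff p.2 (τ u))) =
        if n = 0 then u else 0) ∧
    (∀ u : ExteriorAlgebra ℚ V, ∀ n : ℕ,
        ∑ p ∈ Finset.HasAntidiagonal.antidiagonal n,
          PowerSeries.coeff p.1 (τ (PowerSeries.coeff p.2 (σ u))) =
        if n = 0 then u else 0) := by
  have hσ' (j : ℕ) : σ (Xp j) = C (Xp j) + X * σ (Xp (j + 1)) := by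
    ext (_ | n) <;> simp [hσ, coeff_succ_X_mul, add_assoc, add_comm 1]
  have hτ' (j : ℕ) : τ (Xp j) = C (Xp j) - X * C (Xp (j + 1)) := by
    ext (_ | _ | n) <;> simp [hτ, coeff_X]
  have hστ : (linearExtend σ).comp τ = C := ExteriorAlgebra.ringHom_ext_Xp fun j => by
    simp [hτ', linearExtend_C, linearExtend_X, hσ' j]
  have hτσ : (linearExtend τ).comp σ = C := by
    refine ExteriorAlgebra.ringHom_ext_Xp fun j => sub_eq_zero.1 ?_
    refine eq_zero_of_eq_X_mul_succ (g := fun j => linearExtend τ (σ (Xp j)) - C (Xp j))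
      (fun j => ?_) j
    simp only [hσ' j, map_add, map_mul, linearExtend_C, linearExtend_X, hτ', mul_sub]
    abel
  refine ⟨fun u n => ?_, fun u n => ?_⟩
  · rw [← coeff_linearExtend, ← RingHom.comp_apply, hστ, coeff_C]
  · rw [← coeff_linearExtend, ← RingHom.comp_apply, hτσ, coeff_C]
end
end

section
/- Let σ₋(w) be the Hasse–Schmidt derivation on ⋀ℚ[X] with σ₋(w)X^j = ∑_{i=0}^{j} X^{j-i} w^{-i}, and σ₊(t)X^j = ∑_{i≥0} X^{j+i}t^i. Then in ⋀¹V⟦t, w^{-1}⟧: σ₋(w)σ₊(t)X^0 = (1 − t/w)^{-1} · σ₊(t)X^0 = exp(∑_{i≥1} t^i/(i·w^i)) · σ₊(t)X^0. -/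
/-!
Since `X^0` is concentrated in degree `0`, `σ₊(t)X^0` is the sequence `(tⁿ)ₙ`, and in degree `n`
`σ₋(w)` turns it into `∑ₐ uᵃ tⁿ⁺ᵃ = (∑ₐ (tu)ᵃ) · tⁿ`. Both closed forms are the geometric series
`1/(1 - x)` substituted at `x = tu`. For `(1 - tu)⁻¹` this is immediate. For the exponential,
`∑_{i≥1} tⁱuⁱ/i` is `-log(1 - x)` at `x = tu`, and `E = exp(-log(1 - x))` satisfies
`E' = E/(1 - x)`, so `((1 - x)E)' = 0` and `E = 1/(1 - x)`; the truncated sum defining `expMv`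
is the substitution into `exp` because `fᵏ` has no terms of degree `< k` when `f(0) = 0`.
-/

noncomputable section

/-- The scalar ring `ℚ⟦t, w⁻¹⟧`, a power-series ring in two variables: variable `0`
is `t` and variable `1` is `u = w⁻¹`. -/
abbrev R2 : Type := MvPowerSeries (Fin 2) ℚ

def T : R2 := MvPowerSeries.X 0
def U : R2 := MvPowerSeries.X 1

/-- `⋀¹V⟦t, w⁻¹⟧`, encoded by coordinates: the value at `n` is the coefficient of `X^n`. -/
abbrev W : Type := ℕ → R2

/-- `σ₊(t)` in coordinates: `σ₊(t)X^j = ∑_{i≥0} X^{j+i}t^i`, i.e.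
`(σ₊(t)f)(n) = ∑_{j ≤ n} t^{n-j} f(j)`. -/
def Sigup : W → W := fun f n => ∑ j ∈ Finset.range (n + 1), T ^ (n - j) * f j

/-- `σ₋(w)` in coordinates: `σ₋(w)X^j = ∑_{i=0}^{j} X^{j-i} w^{-i}`, i.e.
`σ₋(w)f = ∑_{a ≥ 0} u^a · (shift of f)`; the coefficient of a monomial `d` only
receives contributions from `a ≤ d(u)`, making the sum finite. -/
def Sdown : W → W := fun f n =>
  (fun d => ∑ a ∈ Finset.range (d 1 + 1), MvPowerSeries.coeff d (U ^ a * f (n + a)) : R2)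

/-- `X^0` in coordinates. -/
def X0 : W := fun n => if n = 0 then 1 else 0

/-- The formal exponential of a multivariate power series with zero constant term. -/
def expMv (f : R2) : R2 :=
  (fun d => ∑ k ∈ Finset.range ((d.sum fun _ n => n) + 1),
      MvPowerSeries.coeff d (f ^ k) / (Nat.factorial k) : R2)

/-- `∑_{i ≥ 1} t^i/(i·w^i)`: the coefficient of `t^i u^i` is `1/i` for `i ≥ 1`. -/
def P : R2 :=
  (fun d => if 1 ≤ d 0 ∧ d 0 = d 1 then 1 / (d 0 : ℚ) else 0 : R2)

open PowerSeries

def negLogOneSub : ℚ⟦X⟧ := mk fun n => if n = 0 then 0 else 1 / n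

lemma constantCoeff_negLogOneSub : constantCoeff negLogOneSub = 0 := by
  simp [negLogOneSub, ← coeff_zero_eq_constantCoeff_apply]

lemma hasSubst_negLogOneSub : HasSubst negLogOneSub :=
  .of_constantCoeff_zero' constantCoeff_negLogOneSub

lemma derivative_negLogOneSub : d⁄dX ℚ negLogOneSub = mk 1 := by
  ext n
  rw [coeff_derivative, negLogOneSub, coeff_mk, coeff_mk, if_neg n.succ_ne_zero, Pi.one_apply]
  push_cast
  field_simp

theorem exp_subst_negLogOneSub : (exp ℚ).subst negLogOneSub = mk 1 := by
  set E := (exp ℚ).subst negLogOneSub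
  have hE0 : constantCoeff E = 1 := by
    have : constantCoeff ((exp ℚ - 1).subst negLogOneSub) = 0 :=
      constantCoeff_subst_eq_zero constantCoeff_negLogOneSub _ (by simp [constantCoeff_exp])
    rwa [subst_sub hasSubst_negLogOneSub, map_sub, ← coe_substAlgHom hasSubst_negLogOneSub,
      map_one, coe_substAlgHom, map_one, sub_eq_zero] at this
  have hE' : d⁄dX ℚ E = E * mk 1 := by
    rw [derivative_subst hasSubst_negLogOneSub, derivative_exp, derivative_negLogOneSub]
  have hconst : (1 - X) * E = 1 := by
    apply derivative.ext
    · rw [Derivation.leibniz, hE', smul_eq_mul, smul_eq_mul, mul_left_comm, mul_comm (1 - X),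
        mk_one_mul_one_sub_eq_one]
      simp
    · simp [hE0]
  calc E = mk 1 * ((1 - X) * E) := by rw [← mul_assoc, mk_one_mul_one_sub_eq_one, one_mul]
    _ = mk 1 := by rw [hconst, mul_one]

theorem expMv_eq_subst_exp {f : R2} (hf : MvPowerSeries.constantCoeff f = 0) :
    expMv f = (exp ℚ).subst f := by
  ext d
  have hvanish : ∀ k, d.degree < k → MvPowerSeries.coeff d (f ^ k) = 0 := fun k hk =>
    MvPowerSeries.coeff_of_lt_order <|
      (Nat.cast_lt.mpr hk).trans_le (MvPowerSeries.le_order_pow_of_constantCoeff_eq_zero k hf)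
  change ∑ k ∈ Finset.range (d.degree + 1), _ = _
  rw [coeff_subst (.of_constantCoeff_zero hf),
    finsum_eq_sum_of_support_subset (s := Finset.range (d.degree + 1))]
  · refine Finset.sum_congr rfl fun k _ => ?_
    rw [coeff_exp, smul_eq_mul, div_eq_inv_mul, one_div]
    rfl
  · intro k hk
    rw [Function.mem_support] at hk
    rw [Finset.coe_range, Set.mem_Iio, Nat.lt_succ_iff]
    by_contra! hlt
    exact hk (by rw [hvanish k hlt, smul_zero])

lemma finsupp_fin_two_eq_iff (d : Fin 2 →₀ ℕ) (a b : ℕ) :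
    d = Finsupp.single 0 a + Finsupp.single 1 b ↔ d 0 = a ∧ d 1 = b := by
  constructor
  · rintro rfl
    simp
  · rintro ⟨h0, h1⟩
    ext i
    fin_cases i <;> simp [h0, h1]

lemma T_pow_mul_U_pow (m a : ℕ) :
    T ^ m * U ^ a = MvPowerSeries.monomial (Finsupp.single 0 m + Finsupp.single 1 a) 1 := by
  rw [T, U, MvPowerSeries.X_pow_eq, MvPowerSeries.X_pow_eq, MvPowerSeries.monomial_mul_monomial,
    one_mul]

lemma hasSubst_T_mul_U : HasSubst (T * U) :=
  .of_constantCoeff_zero (by simp [T, U])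

lemma coeff_subst_T_mul_U (f : ℚ⟦X⟧) (d : Fin 2 →₀ ℕ) :
    MvPowerSeries.coeff d (f.subst (T * U)) = if d 0 = d 1 then coeff (d 0) f else 0 := by
  have hcoeff (k : ℕ) :
      MvPowerSeries.coeff d ((T * U) ^ k) = if d 0 = k ∧ d 1 = k then 1 else 0 := by
    rw [mul_pow, T_pow_mul_U_pow, MvPowerSeries.coeff_monomial,
      if_congr (finsupp_fin_two_eq_iff ..) rfl rfl]
  rw [coeff_subst hasSubst_T_mul_U]
  simp only [hcoeff, smul_eq_mul, mul_ite, mul_one, mul_zero]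
  split_ifs with h
  · rw [finsum_eq_single _ (d 0) (fun k hk => if_neg (by omega)), if_pos ⟨rfl, h.symm⟩]
  · exact finsum_eq_zero_of_forall_eq_zero fun k => if_neg (by omega)

lemma invOfUnit_one_sub_T_mul_U :
    MvPowerSeries.invOfUnit (1 - T * U) 1 = (mk 1 : ℚ⟦X⟧).subst (T * U) := by
  have hleft : (mk 1 : ℚ⟦X⟧).subst (T * U) * (1 - T * U) = 1 := by
    have hsub : (1 - X : ℚ⟦X⟧).subst (T * U) = 1 - T * U := by
      rw [← coe_substAlgHom hasSubst_T_mul_U, map_sub, map_one, coe_substAlgHom,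
        subst_X hasSubst_T_mul_U]
    rw [← hsub, ← subst_mul hasSubst_T_mul_U, mk_one_mul_one_sub_eq_one,
      ← coe_substAlgHom hasSubst_T_mul_U, map_one]
  exact (left_inv_eq_right_inv hleft (MvPowerSeries.mul_invOfUnit _ _ (by simp [T, U]))).symm

lemma P_eq_subst : P = negLogOneSub.subst (T * U) := by
  ext d
  rw [coeff_subst_T_mul_U, MvPowerSeries.coeff_apply, P, negLogOneSub, coeff_mk]
  split_ifs <;> first | rfl | omega

lemma expMv_P : expMv P = (mk 1 : ℚ⟦X⟧).subst (T * U) := by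
  have hP : MvPowerSeries.constantCoeff P = 0 := by
    rw [P_eq_subst]
    exact constantCoeff_subst_eq_zero (by simp [T, U]) _ constantCoeff_negLogOneSub
  rw [expMv_eq_subst_exp hP, P_eq_subst,
    ← subst_comp_subst_apply hasSubst_negLogOneSub hasSubst_T_mul_U,
    exp_subst_negLogOneSub]

lemma Sigup_X0 : Sigup X0 = fun n => T ^ n := by
  funext n
  rw [Sigup, Finset.sum_eq_single_of_mem 0 (by simp) (fun j _ hj => by simp [X0, hj])]
  simp [X0]

lemma Sdown_T_pow (n : ℕ) :
    Sdown (fun m => T ^ m) n = (mk 1 : ℚ⟦X⟧).subst (T * U) * T ^ n := by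
  ext d
  have hterm (a : ℕ) : MvPowerSeries.coeff d (U ^ a * T ^ (n + a)) =
      if d 0 = n + a ∧ d 1 = a then 1 else 0 := by
    rw [mul_comm, T_pow_mul_U_pow, MvPowerSeries.coeff_monomial,
      if_congr (finsupp_fin_two_eq_iff ..) rfl rfl]
  rw [MvPowerSeries.coeff_apply, Sdown]
  simp only [hterm]
  have hTn : T ^ n = MvPowerSeries.monomial (Finsupp.single 0 n) 1 := MvPowerSeries.X_pow_eq 0 n
  rw [Finset.sum_eq_single_of_mem (d 1) (by simp) (fun a _ ha => if_neg (by omega)), hTn,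
    MvPowerSeries.coeff_mul_monomial, if_congr Finsupp.single_le_iff rfl rfl, coeff_subst_T_mul_U]
  simp only [Finsupp.tsub_apply, Finsupp.single_apply, zero_ne_one,
    if_false, tsub_zero, coeff_mk, Pi.one_apply, mul_one, and_true]
  split_ifs <;> first | rfl | omega

/-- `σ₋(w)σ₊(t)X^0 = (1 − t/w)⁻¹ · σ₊(t)X^0 = exp(∑_{i≥1} t^i/(i w^i)) · σ₊(t)X^0`
in `⋀¹V⟦t, w⁻¹⟧`. -/
theorem sdown_sup_X0 :
    (∀ n, Sdown (Sigup X0) n = MvPowerSeries.invOfUnit (1 - T * U) 1 * Sigup X0 n) ∧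
    (∀ n, Sdown (Sigup X0) n = expMv P * Sigup X0 n) := by
  rw [invOfUnit_one_sub_T_mul_U, expMv_P, Sigup_X0]
  exact ⟨Sdown_T_pow, Sdown_T_pow⟩

end
end

section
/- Let ∂⁰ ∈ V* be the linear form on V = ℚ[X] with ∂⁰(X^i) = δ_{0,i}, and let ∂⁰⌟: ⋀V → ⋀V be the induced contraction (an odd derivation). Let σ₊(t) be the HS derivation with σ₊(t)X^j = ∑_{i≥0}X^{j+i}t^i. Then for every partition λ of length at most r, ∂⁰⌟(σ₊(t)X^r(λ)) = σ₊(t)(∂⁰⌟X^r(λ)). -/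
noncomputable section

/-- `X^r(λ) = X^{r-1+λ₁} ∧ X^{r-2+λ₂} ∧ ⋯ ∧ X^{λ_r}`. -/
def Xr (r : ℕ) (l : Fin r → ℕ) : ExteriorAlgebra ℚ V :=
  ((List.finRange r).map fun k : Fin r => Xp (r - 1 - k.val + l k)).prod

/-- The coefficientwise extension of a linear operator to `(⋀V)⟦t⟧`. -/
def cext (c : ExteriorAlgebra ℚ V →ₗ[ℚ] ExteriorAlgebra ℚ V)
    (f : PowerSeries (ExteriorAlgebra ℚ V)) : PowerSeries (ExteriorAlgebra ℚ V) :=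
  PowerSeries.mk fun n => c (PowerSeries.coeff n f)

/-! Both sides are additive in the argument, so by induction on `⋀V` it suffices to treat `1` and
left multiplication by `ι v`. The key identity is
`∂⁰⌟(σ₊(t)v · F) = ∂⁰(v) F − σ₊(t)v · ∂⁰⌟F` for `v ∈ V` and `F ∈ (⋀V)⟦t⟧`: for `v = X^j` the
coefficient of `t^i` in `σ₊(t)X^j` is `X^{j+i}`, and `∂⁰(X^{j+i}) = δ_{0,j} δ_{0,i}`. -/

section

open ExteriorAlgebra PowerSeries

local notation "⋀V" => ExteriorAlgebra ℚ V

variable (c : ⋀V →ₗ[ℚ] ⋀V)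

@[simp]
lemma coeff_cext (f : PowerSeries ⋀V) (n : ℕ) : coeff n (cext c f) = c (coeff n f) :=
  coeff_mk _ _

lemma cext_zero : cext c 0 = 0 := by
  ext n; simp

lemma cext_add (f g : PowerSeries ⋀V) : cext c (f + g) = cext c f + cext c g := by
  ext n; simp

lemma cext_smul (q : ℚ) (f : PowerSeries ⋀V) : cext c (q • f) = q • cext c f := by
  ext n; simp

lemma cext_one (hc1 : c 1 = 0) : cext c 1 = 0 := by
  ext n; simp [coeff_one, apply_ite c, hc1]

variable (hc : ∀ (v : V) (u : ⋀V), c (ι ℚ v * u) = (v 0) • u - ι ℚ v * c u)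
  (σ : ⋀V →+* PowerSeries ⋀V) (hσ : ∀ j, σ (Xp j) = PowerSeries.mk fun i => Xp (j + i))
include hc hσ

lemma cext_sigma_Xp_mul (j : ℕ) (F : PowerSeries ⋀V) :
    cext c (σ (Xp j) * F) = (Finsupp.single j 1 : V) 0 • F - σ (Xp j) * cext c F := by
  ext n
  simp only [hσ, coeff_cext, coeff_mul, coeff_mk, map_sum, map_sub, coeff_smul]
  simp only [Xp, hc, Finset.sum_sub_distrib]
  congr 1
  rw [Finset.sum_eq_single_of_mem (0, n) (by simp)]
  · rfl
  · rintro ⟨a, b⟩ hmem hab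
    have ha : a ≠ 0 := by
      rintro rfl
      exact hab (by simpa [eq_comm] using hmem)
    simp [ha]

lemma cext_sigma_ι_mul (v : V) (F : PowerSeries ⋀V) :
    cext c (σ (ι ℚ v) * F) = v 0 • F - σ (ι ℚ v) * cext c F := by
  induction v using Finsupp.induction_linear with
  | zero => simp [cext_zero]
  | add v w hv hw =>
    simp only [map_add, add_mul, cext_add, hv, hw, Finsupp.add_apply, add_smul]
    abel
  | single j q =>
    rw [show Finsupp.single j q = q • Finsupp.single j 1 by simp, map_smul,
      show ι ℚ (Finsupp.single j 1) = Xp j from rfl, map_rat_smul, smul_mul_assoc, cext_smul,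
      cext_sigma_Xp_mul c hc σ hσ, Finsupp.smul_apply, smul_sub, smul_mul_assoc, smul_smul,
      smul_eq_mul]

theorem cext_sigma_eq_sigma_apply (hc1 : c 1 = 0) (x : ⋀V) : cext c (σ x) = σ (c x) := by
  induction x using CliffordAlgebra.left_induction with
  | algebraMap q =>
    rw [Algebra.algebraMap_eq_smul_one, map_rat_smul, map_smul, map_one, cext_smul, cext_one c hc1,
      hc1, smul_zero, smul_zero, map_zero]
  | add x y hx hy => rw [map_add, cext_add, hx, hy, map_add, map_add]
  | ι_mul x v hx => rw [map_mul, cext_sigma_ι_mul c hc σ hσ, hx, hc, map_sub, map_mul, map_rat_smul]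

end

theorem contraction_commutes_sigma_general (r : ℕ)
    (c : ExteriorAlgebra ℚ V →ₗ[ℚ] ExteriorAlgebra ℚ V)
    (hc1 : c 1 = 0)
    (hc : ∀ (v : V) (u : ExteriorAlgebra ℚ V),
      c (ExteriorAlgebra.ι ℚ v * u) = (v 0) • u - ExteriorAlgebra.ι ℚ v * c u)
    (σ : ExteriorAlgebra ℚ V →+* PowerSeries (ExteriorAlgebra ℚ V))
    (hσ : ∀ j, σ (Xp j) = PowerSeries.mk fun i => Xp (j + i))
    (l : Fin r → ℕ) :
    cext c (σ (Xr r l)) = σ (c (Xr r l)) :=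
  cext_sigma_eq_sigma_apply c hc σ hσ hc1 (Xr r l)

/-- Let `∂⁰⌟` be the contraction along the linear form `∂⁰` (with `∂⁰(X^i) = δ_{0,i}`),
i.e. the odd derivation of `⋀V` characterized by `∂⁰⌟1 = 0` and
`∂⁰⌟(v ∧ u) = ∂⁰(v)·u − v ∧ (∂⁰⌟u)` for `v ∈ V`, and let `σ₊(t)` be the
Hasse–Schmidt derivation with `σ₊(t)X^j = ∑_{i≥0}X^{j+i}t^i`.  Then for every
partition `λ` of length at most `r`, `∂⁰⌟(σ₊(t)X^r(λ)) = σ₊(t)(∂⁰⌟X^r(λ))`. -/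
theorem contraction_commutes_sigma (r : ℕ)
    (c : ExteriorAlgebra ℚ V →ₗ[ℚ] ExteriorAlgebra ℚ V)
    (hc1 : c 1 = 0)
    (hc : ∀ (v : V) (u : ExteriorAlgebra ℚ V),
      c (ExteriorAlgebra.ι ℚ v * u) = (v 0) • u - ExteriorAlgebra.ι ℚ v * c u)
    (σ : ExteriorAlgebra ℚ V →+* PowerSeries (ExteriorAlgebra ℚ V))
    (hσ : ∀ j, σ (Xp j) = PowerSeries.mk fun i => Xp (j + i))
    (l : Fin r → ℕ) (hl : Antitone l) :
    cext c (σ (Xr r l)) = σ (c (Xr r l)) :=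
  contraction_commutes_sigma_general r c hc1 hc σ hσ l
end
end

section
/- For all u ∈ ⋀^r V the equality σ₊(z)X^0 ∧ u = z^r σ₊(z)σ̄₋(z)(σ̄_r u ∧ X^0) holds in ⋀^{r+1}V⟦z, z^{-1}⟧, where σ₊(z), σ̄₋(z) are the Schubert derivations with σ₊(z)X^j = ∑_{i≥0}X^{j+i}z^i, σ̄₋(z)X^j = X^j − X^{j−1}z^{−1} (with X^i = 0 for i < 0), and σ̄_r is the r-th coefficient of σ̄₊(z) = ∑_i (−1)^i σ̄_i z^i. -/
noncomputable section

/-!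
`σ₊`, `σ̄₊`, `σ̄₋` are ring homomorphisms, so their behaviour on `⋀^r V` follows by induction on
the number of factors `X^a` from their values on `V`. Write `σ̄₊(z)u = ∑_{i ≤ r} b_i z^i` with
`b_i ∈ ⋀^r V`. Since `σ₊(z)(X^a - X^{a+1}z) = X^a`, we get `∑ᵢ σ₊(z)(b_i) z^i = u`. Since `b_r` is
the image of `u` under `X^a ↦ -X^{a+1}` and `σ̄₋(z)(-X^{a+1}) = z⁻¹ σ̄₊(z)X^a`, we get
`σ̄₋(z)b_r = z^{-r} σ̄₊(z)u`. As `σ̄₋(z)X^0 = X^0`, this gives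
`z^r σ₊(z)σ̄₋(z)(σ̄_r u ∧ X^0) = (-1)^r ∑ᵢ z^i σ₊(z)b_i ∧ σ₊(z)X^0 = σ₊(z)X^0 ∧ u`,
the last step because `X^0` graded-commutes with `⋀^r V`.
-/

open PowerSeries

theorem ExteriorAlgebra.ι_mul_eq_neg_one_pow_smul {R M : Type*} [CommRing R] [AddCommGroup M]
    [Module R M] {r : ℕ} {y : ExteriorAlgebra R M} (hy : y ∈ ⋀[R]^r M) (m : M) :
    ι R m * y = (-1 : R) ^ r • (y * ι R m) := by
  induction hy using Submodule.pow_induction_on_left' with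
  | algebraMap a => rw [pow_zero, one_smul, Algebra.commutes]
  | add x y i _ _ ihx ihy => rw [mul_add, ihx, ihy, add_mul, smul_add]
  | mem_mul w hw i x _ ih =>
    obtain ⟨w, rfl⟩ := hw
    rw [← mul_assoc, ← neg_eq_of_add_eq_zero_left (ι_add_mul_swap m w), neg_mul, mul_assoc, ih,
      mul_smul_comm, pow_succ, mul_comm, mul_smul, neg_one_smul, mul_assoc]

theorem PowerSeries.mk_ite_eq_C_add_C_mul_X {R : Type*} [Semiring R] (a b : R) :
    (mk fun i => if i = 0 then a else if i = 1 then b else 0) = C a + C b * X := by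
  ext (_ | _ | i) <;> simp

theorem PowerSeries.coeff_coe_eq_ite {R : Type*} [Semiring R] (φ : R⟦X⟧) (n : ℤ) :
    (φ : LaurentSeries R).coeff n = if 0 ≤ n then coeff n.toNat φ else 0 := by
  rw [coeff_coe]
  split_ifs
  · omega
  · rfl
  · rw [show n.natAbs = n.toNat by omega]
  · omega

section CoeffMul

variable {R : Type*} [Ring R] (a b : R) (φ : R⟦X⟧)

theorem PowerSeries.coeff_zero_C_sub_C_mul_X_mul :
    coeff 0 ((C a - C b * X) * φ) = a * coeff 0 φ := by
  simp [sub_mul, mul_assoc]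

theorem PowerSeries.coeff_succ_C_sub_C_mul_X_mul (j : ℕ) :
    coeff (j + 1) ((C a - C b * X) * φ) = a * coeff (j + 1) φ - b * coeff j φ := by
  rw [sub_mul, map_sub, coeff_C_mul, mul_assoc, coeff_C_mul, coeff_succ_X_mul]

theorem PowerSeries.sum_map_coeff_C_sub_C_mul_X_mul {S : Type*} [Ring S] (F : R →+* S) (t : S)
    (N : ℕ) :
    ∑ i ∈ Finset.range (N + 1), F (coeff i ((C a - C b * X) * φ)) * t ^ i =
      F a * ∑ i ∈ Finset.range (N + 1), F (coeff i φ) * t ^ i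
        - F b * (∑ i ∈ Finset.range N, F (coeff i φ) * t ^ i) * t := by
  simp only [Finset.sum_range_succ', coeff_succ_C_sub_C_mul_X_mul, coeff_zero_C_sub_C_mul_X_mul]
  simp only [map_sub, map_mul, sub_mul, Finset.sum_sub_distrib, Finset.mul_sum, Finset.sum_mul,
    mul_add, mul_assoc, pow_succ]
  abel

end CoeffMul

section Schubert

local notation "Λ" => ExteriorAlgebra ℚ V

theorem Xp_mul_mem {r : ℕ} {x : Λ} (a : ℕ) (hx : x ∈ ⋀[ℚ]^r V) : Xp a * x ∈ ⋀[ℚ]^(r + 1) V := by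
  rw [ExteriorAlgebra.exteriorPower, pow_succ']
  exact Submodule.mul_mem_mul ⟨_, rfl⟩ hx

@[elab_as_elim]
theorem exteriorPower_induction {P : ∀ r (u : Λ), u ∈ ⋀[ℚ]^r V → Prop}
    (one : P 0 1 (Submodule.one_le.mp (pow_zero _).ge))
    (smul : ∀ r (q : ℚ) x hx, P r x hx → P r (q • x) (Submodule.smul_mem _ q hx))
    (add : ∀ r x y hx hy, P r x hx → P r y hy → P r (x + y) (add_mem hx hy))
    (Xp_mul : ∀ r a x hx, P r x hx → P (r + 1) (Xp a * x) (Xp_mul_mem a hx))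
    {r : ℕ} {u : Λ} (hu : u ∈ ⋀[ℚ]^r V) : P r u hu := by
  induction hu using Submodule.pow_induction_on_left' with
  | algebraMap q => simpa [Algebra.algebraMap_eq_smul_one] using smul 0 q 1 _ one
  | add x y i hx hy ihx ihy => exact add i x y hx hy ihx ihy
  | mem_mul w hw i x hx ih =>
    obtain ⟨v, rfl⟩ := hw
    induction v using Finsupp.induction_linear with
    | zero => simpa using smul _ 0 _ _ (Xp_mul i 0 x hx ih)
    | add v w hv hw => simpa [add_mul] using add _ _ _ _ _ hv hw
    | single a q =>
      convert smul _ q _ _ (Xp_mul i a x hx ih) using 1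
      rw [← Finsupp.smul_single_one, map_smul, smul_mul_assoc, Xp]

theorem coeff_map_eq_zero_of_lt {g : Λ →+* Λ⟦X⟧}
    (hg : ∀ a, g (Xp a) = C (Xp a) - C (Xp (a + 1)) * X) {r : ℕ} {u : Λ} (hu : u ∈ ⋀[ℚ]^r V)
    {j : ℕ} (hj : r < j) : coeff j (g u) = 0 := by
  induction hu using exteriorPower_induction generalizing j with
  | one => simp [coeff_one, hj.ne']
  | smul r q x hx ih => simp [map_rat_smul, ih hj]
  | add r x y hx hy ihx ihy => simp [ihx hj, ihy hj]
  | Xp_mul r a x hx ih =>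
    obtain ⟨j, rfl⟩ := Nat.exists_eq_add_one_of_ne_zero hj.ne_bot
    rw [map_mul, hg, coeff_succ_C_sub_C_mul_X_mul, ih (by omega), ih (by omega), mul_zero, mul_zero,
      sub_zero]

theorem coeff_map_mem_exteriorPower {g : Λ →+* Λ⟦X⟧}
    (hg : ∀ a, g (Xp a) = C (Xp a) - C (Xp (a + 1)) * X) {r : ℕ} {u : Λ} (hu : u ∈ ⋀[ℚ]^r V)
    (i : ℕ) : coeff i (g u) ∈ ⋀[ℚ]^r V := by
  induction hu using exteriorPower_induction generalizing i with
  | one =>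
    rw [map_one, coeff_one]
    split_ifs
    exacts [Submodule.one_le.mp (pow_zero _).ge, zero_mem _]
  | smul r q x hx ih => simpa [map_rat_smul] using Submodule.smul_mem _ q (ih i)
  | add r x y hx hy ihx ihy => simpa using add_mem (ihx i) (ihy i)
  | Xp_mul r a x hx ih =>
    rw [map_mul, hg]
    cases i with
    | zero =>
      rw [coeff_zero_C_sub_C_mul_X_mul]
      exact Xp_mul_mem a (ih 0)
    | succ i =>
      rw [coeff_succ_C_sub_C_mul_X_mul]
      exact sub_mem (Xp_mul_mem a (ih _)) (Xp_mul_mem _ (ih _))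

theorem sum_map_coeff_mul_X_pow_eq_C {f g : Λ →+* Λ⟦X⟧}
    (hf : ∀ a, f (Xp a) = C (Xp a) + f (Xp (a + 1)) * X)
    (hg : ∀ a, g (Xp a) = C (Xp a) - C (Xp (a + 1)) * X) {r : ℕ} {u : Λ} (hu : u ∈ ⋀[ℚ]^r V)
    {N : ℕ} (hN : r < N) : ∑ i ∈ Finset.range N, f (coeff i (g u)) * X ^ i = C u := by
  induction hu using exteriorPower_induction generalizing N with
  | one => simp [coeff_one, hN]
  | smul r q x hx ih => simp [map_rat_smul, ← Finset.smul_sum, ih hN]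
  | add r x y hx hy ihx ihy => simp [add_mul, Finset.sum_add_distrib, ihx hN, ihy hN]
  | Xp_mul r a x hx ih =>
    obtain ⟨N, rfl⟩ := Nat.exists_eq_add_one_of_ne_zero hN.ne_bot
    rw [map_mul, hg, sum_map_coeff_C_sub_C_mul_X_mul, ih (by omega), ih (by omega), map_mul,
      mul_assoc _ (C x), (commute_X (C x)).eq, ← mul_assoc, ← sub_mul, sub_eq_of_eq_add (hf a)]

-- With `z⁻¹` written `X` in `h = σ̄₋(z)`, this says `σ̄₋(z) b_r = z^{-r} σ̄₊(z) u`.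
theorem coeff_map_coeff_eq_ite {g h : Λ →+* Λ⟦X⟧}
    (hg : ∀ a, g (Xp a) = C (Xp a) - C (Xp (a + 1)) * X)
    (hh : ∀ a, h (Xp (a + 1)) = C (Xp (a + 1)) - C (Xp a) * X) {r : ℕ} {u : Λ}
    (hu : u ∈ ⋀[ℚ]^r V) (j : ℕ) :
    coeff j (h (coeff r (g u))) = if j ≤ r then coeff (r - j) (g u) else 0 := by
  induction hu using exteriorPower_induction generalizing j with
  | one => cases j <;> simp [coeff_one]
  | smul r q x hx ih => simp [map_rat_smul, ih, apply_ite (q • ·)]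
  | add r x y hx hy ihx ihy => simp [ihx, ihy, ite_add_ite]
  | Xp_mul r a x hx ih =>
    have htop : coeff (r + 1) (g (Xp a * x)) = -(Xp (a + 1) * coeff r (g x)) := by
      rw [map_mul, hg, coeff_succ_C_sub_C_mul_X_mul, coeff_map_eq_zero_of_lt hg hx r.lt_succ_self,
        mul_zero, zero_sub]
    rw [htop, map_neg, map_mul, hh, map_neg]
    cases j with
    | zero =>
      simp only [coeff_zero_C_sub_C_mul_X_mul, ih 0, Nat.zero_le, if_true, Nat.sub_zero, htop]
    | succ j =>
      rw [coeff_succ_C_sub_C_mul_X_mul, ih, ih]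
      rcases lt_trichotomy j r with hj | rfl | hj
      · obtain ⟨k, rfl⟩ := Nat.exists_eq_add_of_lt hj
        simp [map_mul, hg, coeff_succ_C_sub_C_mul_X_mul, hj.le, show j + k + 1 - j = k + 1 by omega]
      · simp [map_mul, hg, coeff_zero_C_sub_C_mul_X_mul]
      · simp [hj.le, hj.not_ge]

theorem Xp_mul_eq_neg_one_pow_smul {r : ℕ} {y : Λ} (hy : y ∈ ⋀[ℚ]^r V) (a : ℕ) :
    Xp a * y = (-1 : ℚ) ^ r • (y * Xp a) :=
  ExteriorAlgebra.ι_mul_eq_neg_one_pow_smul hy _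

theorem coe_map_Xp_zero_mul_C_eq_sum {σp σbp σm : Λ →+* Λ⟦X⟧}
    (hσp : ∀ a, σp (Xp a) = C (Xp a) + σp (Xp (a + 1)) * X)
    (hσbp : ∀ a, σbp (Xp a) = C (Xp a) - C (Xp (a + 1)) * X)
    (hσm : ∀ a, σm (Xp (a + 1)) = C (Xp (a + 1)) - C (Xp a) * X) (hσm₀ : σm (Xp 0) = C (Xp 0))
    {r : ℕ} {u : Λ} (hu : u ∈ ⋀[ℚ]^r V) :
    ((σp (Xp 0) * C u : Λ⟦X⟧) : LaurentSeries Λ) =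
      ∑ j ∈ Finset.range (r + 2),
        (σp (coeff j (σm (((-1 : ℚ) ^ r • coeff r (σbp u)) * Xp 0))) : LaurentSeries Λ) *
          HahnSeries.single ((r : ℤ) - j) 1 := by
  have hterm : ∀ j, σp (coeff j (σm (((-1 : ℚ) ^ r • coeff r (σbp u)) * Xp 0))) =
      if j ≤ r then σp (Xp 0) * σp (coeff (r - j) (σbp u)) else 0 := by
    intro j
    rw [map_mul, hσm₀, coeff_mul_C, map_rat_smul, coeff_smul, coeff_map_coeff_eq_ite hσbp hσm hu]
    split_ifs
    · rw [← map_mul, Xp_mul_eq_neg_one_pow_smul (coeff_map_mem_exteriorPower hσbp hu _),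
        smul_mul_assoc]
    · simp
  have hshift : ∀ j ∈ Finset.range (r + 1), ((σp (Xp 0) * σp (coeff (r - j) (σbp u)) : Λ⟦X⟧) :
      LaurentSeries Λ) * HahnSeries.single ((r : ℤ) - j) 1 =
        ((σp (Xp 0) * (σp (coeff (r - j) (σbp u)) * X ^ (r - j)) : Λ⟦X⟧) : LaurentSeries Λ) := by
    intro j hj
    rw [← mul_assoc, map_mul _ _ (X ^ _), HahnSeries.ofPowerSeries_X_pow,
      Nat.cast_sub (Finset.mem_range_succ_iff.mp hj)]
  simp only [hterm]
  rw [Finset.sum_range_succ, if_neg (by omega), map_zero, zero_mul, add_zero,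
    Finset.sum_congr rfl fun j hj => by rw [if_pos (Finset.mem_range_succ_iff.mp hj), hshift j hj],
    ← map_sum, ← Finset.mul_sum]
  have hreflect := Finset.sum_range_reflect (fun i => σp (coeff i (σbp u)) * X ^ i) (r + 1)
  rw [add_tsub_cancel_right] at hreflect
  rw [hreflect, sum_map_coeff_mul_X_pow_eq_C hσp hσbp hu r.lt_succ_self]

end Schubert

/-- For all `u ∈ ⋀^r V`, `σ₊(z)X^0 ∧ u = z^r σ₊(z)σ̄₋(z)(σ̄_r u ∧ X^0)`.
Here `σ₊(z)`, `σ̄₊(z)`, `σ̄₋(z)` are the Schubert derivations (multiplicative maps to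
power series in `z`, resp. in `z⁻¹`) determined on `V` by
`σ₊(z)X^j = ∑_{i≥0}X^{j+i}z^i`, `σ̄₊(z)X^j = X^j − X^{j+1}z`,
`σ̄₋(z)X^j = X^j − X^{j−1}z⁻¹` (with `X^{-1} = 0`), and `σ̄_r u` is `(−1)^r` times the
`r`-th coefficient of `σ̄₊(z)u`.  The identity is stated coefficientwise in `z^n`,
`n ∈ ℤ`: the coefficient of `z^n` of the composite series `σ₊(z)σ̄₋(z)` applied to
`v = σ̄_r u ∧ X^0` is `∑_j σ_{n+j}(σ̄₋ⱼ v)`; since `v ∈ ⋀^{r+1}V`, only `j ≤ r+1`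
contributes. -/
theorem sigma_shift_formula (r : ℕ)
    (σp σbp σm : ExteriorAlgebra ℚ V →+* PowerSeries (ExteriorAlgebra ℚ V))
    (hσp : ∀ j, σp (Xp j) = PowerSeries.mk fun i => Xp (j + i))
    (hσbp : ∀ j, σbp (Xp j) =
      PowerSeries.mk fun i => if i = 0 then Xp j else if i = 1 then -Xp (j + 1) else 0)
    (hσm : ∀ j, σm (Xp j) =
      PowerSeries.mk fun i =>
        if i = 0 then Xp j
        else if i = 1 then (if j = 0 then 0 else -Xp (j - 1)) else 0)
    (u : ExteriorAlgebra ℚ V) (hu : u ∈ ⋀[ℚ]^r V) :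
    ∀ n : ℤ,
      (if h : 0 ≤ n then
          PowerSeries.coeff n.toNat (σp (Xp 0) * PowerSeries.C u)
        else 0) =
      ∑ j ∈ Finset.range (r + 2),
        (if h : (0 : ℤ) ≤ n - r + j then
            PowerSeries.coeff (n - r + j).toNat
              (σp (PowerSeries.coeff j
                (σm (((-1 : ℚ) ^ r • PowerSeries.coeff r (σbp u)) * Xp 0))))
          else 0) := by
  have hσp' : ∀ a, σp (Xp a) = C (Xp a) + σp (Xp (a + 1)) * X := fun a => by
    ext (_ | i)
    · simp [hσp]
    · rw [map_add, coeff_succ_mul_X, hσp, hσp]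
      simp [add_assoc, Nat.add_comm 1 i]
  have hσbp' : ∀ a, σbp (Xp a) = C (Xp a) - C (Xp (a + 1)) * X := fun a => by
    rw [hσbp, mk_ite_eq_C_add_C_mul_X, map_neg, neg_mul, sub_eq_add_neg]
  have hσm' : ∀ a, σm (Xp (a + 1)) = C (Xp (a + 1)) - C (Xp a) * X := fun a => by
    simp [hσm, mk_ite_eq_C_add_C_mul_X, sub_eq_add_neg]
  have hσm₀ : σm (Xp 0) = C (Xp 0) := by ext i; simp [hσm, coeff_C]
  intro n
  have h := congrArg (HahnSeries.coeff · n) (coe_map_Xp_zero_mul_C_eq_sum hσp' hσbp' hσm' hσm₀ hu)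
  simp only [HahnSeries.coeff_sum, HahnSeries.coeff_mul_single, mul_one, ← sub_add,
    PowerSeries.coeff_coe_eq_ite] at h
  simpa only [dite_eq_ite] using h
end
end

section
/- Giambelli's formula for Schubert derivations: with ⋀^r V a module over B_r via h_i · u = σ_i u (where σ₊(z) = ∑ σ_i z^i is the Schubert derivation with σ₊(z)X^j = ∑_{i≥0}X^{j+i}z^i), for every partition λ of length at most r one has X^r(λ) = det(σ_{λ_j − j + i})_{1≤i,j≤r} · X^r(0). Consequently ⋀^r V is a free B_r-module of rank 1 generated by X^r(0) = X^{r−1} ∧ ⋯ ∧ X^0. -/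
noncomputable section

/-- The coefficient operators `σ_k` of the Schubert derivation `σ₊(z) = ∑ σ_k z^k`,
with `σ_k = 0` for `k < 0`. -/
def opOf (σp : ExteriorAlgebra ℚ V →+* PowerSeries (ExteriorAlgebra ℚ V)) (k : ℤ) :
    ExteriorAlgebra ℚ V → ExteriorAlgebra ℚ V :=
  fun u => if h : 0 ≤ k then PowerSeries.coeff k.toNat (σp u) else 0

/-- The operator `det(σ_{λ_j − j + i})_{1≤i,j≤r}` expanded by the Leibniz rule
(the `σ_k` commute): `∑_π sign(π) σ_{λ_1−1+π(1)} ∘ ⋯ ∘ σ_{λ_r−r+π(r)}` applied to `u`. -/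
def giambelli (σp : ExteriorAlgebra ℚ V →+* PowerSeries (ExteriorAlgebra ℚ V))
    (r : ℕ) (l : Fin r → ℕ) (u : ExteriorAlgebra ℚ V) : ExteriorAlgebra ℚ V :=
  ∑ π : Equiv.Perm (Fin r),
    (Equiv.Perm.sign π : ℤ) •
      ((List.finRange r).foldr
        (fun j f => opOf σp ((l j : ℤ) - (j : ℕ) + ((π j : ℕ))) ∘ f) id) u

/-- `B_r = ℚ[e₁,…,e_r]` with its Schur basis data. -/
abbrev Br (r : ℕ) := MvPolynomial (Fin r) ℚ

def eP (r : ℕ) (i : ℕ) : Br r :=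
  if h : 1 ≤ i ∧ i ≤ r then MvPolynomial.X ⟨i - 1, by omega⟩
  else if i = 0 then 1 else 0

def Er (r : ℕ) : PowerSeries (Br r) := PowerSeries.mk fun n => (-1) ^ n * eP r n

def hP (r : ℕ) (n : ℤ) : Br r :=
  if n < 0 then 0 else PowerSeries.coeff n.toNat (PowerSeries.invOfUnit (Er r) 1)

def Delta (r : ℕ) (l : Fin r → ℕ) : Br r :=
  Matrix.det (Matrix.of fun i j : Fin r =>
    hP r ((l j : ℤ) - ((j : ℕ) + 1) + ((i : ℕ) + 1)))

/-!
Send `X^{α₁} ∧ ⋯ ∧ X^{α_r}` to the alternant `a_α = det (x_i^{α_k})` in `ℚ[x₁, …, x_r]`. This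
map is injective on `⋀^r V`: for strictly increasing `α`, `a_α` is the only image of a basis
wedge containing the monomial `x^α`. Because `σ₊(z)` is multiplicative and
shifts each factor `X^{α_k}` by `∑ z^i`, it becomes multiplication by `∏ (1 - x_i z)⁻¹`, so `σ_k`
becomes multiplication by `h_k` and Giambelli's operator becomes the Jacobi–Trudi determinant.
The bialternant formula `a_{λ+δ} = det (h_{λ_j-j+i}) a_δ`, which follows from
`(h_{λ_j+i-j}) · ((-1)^{r-1-i} e_{r-1-i}(x without x_t)) = (x_t^{λ_j+r-1-j})` and
`∏ (1 - x_i z) · ∑ h_n z^n = 1`, then gives the formula. Finally `p ↦ p(e(x)) · a_δ` is injective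
on `B_r` (fundamental theorem of symmetric polynomials), and its image is the image of `⋀^r V`:
the `a_{λ+δ}` lie in it, and `e_k · a_α` is a sum of alternants.
-/

open MvPolynomial

/-- `ℚ[x₁, …, x_r]`, where the alternants live; `Br r` is the same ring read as `ℚ[e₁, …, e_r]`. -/
abbrev Pol (r : ℕ) : Type := MvPolynomial (Fin r) ℚ

section Alternant

variable {r : ℕ}

def alternant (a : Fin r → ℕ) : Pol r :=
  (Matrix.of fun k i : Fin r => (X i : Pol r) ^ a k).det

lemma alternant_eq_sum (a : Fin r → ℕ) :
    alternant a = ∑ π : Equiv.Perm (Fin r), Equiv.Perm.sign π • ∏ i, (X i : Pol r) ^ a (π i) :=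
  Matrix.det_apply _

lemma alternant_comp_perm (a : Fin r → ℕ) (π : Equiv.Perm (Fin r)) :
    alternant (a ∘ π) = Equiv.Perm.sign π • alternant a := by
  rw [Units.smul_def, zsmul_eq_mul]
  exact Matrix.det_permute π (Matrix.of fun k i : Fin r => (X i : Pol r) ^ a k)

lemma prod_univ_X_pow_eq_monomial (d : Fin r → ℕ) :
    ∏ i, (X i : Pol r) ^ d i = monomial (Finsupp.equivFunOnFinite.symm d) 1 := by
  rw [monomial_eq, C_1, one_mul, Finsupp.prod_fintype _ _ (by simp)]
  rfl

lemma coeff_alternant {a b : Fin r → ℕ} (ha : StrictMono a) (hb : StrictMono b) :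
    coeff (Finsupp.equivFunOnFinite.symm b) (alternant a) = if a = b then 1 else 0 := by
  have hcomp : ∀ π : Equiv.Perm (Fin r), (fun i => a (π i)) = b ↔ a = b ∧ π = 1 := by
    refine fun π => ⟨fun h => ?_, fun ⟨hab, hπ⟩ => by simp [hab, hπ]⟩
    have hmono : a ∘ π = a ∘ (1 : Equiv.Perm (Fin r)) :=
      Tuple.unique_monotone (by rw [Function.comp_def, h]; exact hb.monotone) ha.monotone
    have hπ : π = 1 := Equiv.ext fun i => ha.injective (congrFun hmono i)
    subst hπ
    exact ⟨h, rfl⟩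
  simp only [alternant_eq_sum, coeff_sum, coeff_smul, prod_univ_X_pow_eq_monomial, coeff_monomial,
    EmbeddingLike.apply_eq_iff_eq]
  simp_rw [hcomp]
  by_cases hab : a = b <;> simp [hab]

lemma sum_comp_perm_of_perm_invariant {ι α M : Type*} [AddCommMonoid M] {C : Finset (ι → α)}
    (hC : ∀ c ∈ C, ∀ π : Equiv.Perm ι, c ∘ π ∈ C) (π : Equiv.Perm ι) (f : (ι → α) → M) :
    ∑ c ∈ C, f (c ∘ π) = ∑ c ∈ C, f c :=
  Finset.sum_nbij' (· ∘ π) (· ∘ π.symm) (fun c hc => hC c hc π) (fun c hc => hC c hc π.symm)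
    (fun c _ => by simp [Function.comp_assoc]) (fun c _ => by simp [Function.comp_assoc])
    (fun _ _ => rfl)

lemma sum_prod_X_pow_mul_alternant {C : Finset (Fin r → ℕ)}
    (hC : ∀ c ∈ C, ∀ π : Equiv.Perm (Fin r), c ∘ π ∈ C) (a : Fin r → ℕ) :
    (∑ c ∈ C, ∏ i, (X i : Pol r) ^ c i) * alternant a = ∑ c ∈ C, alternant (a + c) := by
  have hshift : ∀ π : Equiv.Perm (Fin r),
      ∑ c ∈ C, ∏ i, (X i : Pol r) ^ (a (π i) + c (π i)) =
        (∏ i, (X i : Pol r) ^ a (π i)) * ∑ c ∈ C, ∏ i, (X i : Pol r) ^ c i := by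
    intro π
    refine (sum_comp_perm_of_perm_invariant hC π
      fun c => ∏ i, (X i : Pol r) ^ (a (π i) + c i)).trans ?_
    simp only [pow_add, Finset.prod_mul_distrib, Finset.mul_sum]
  simp only [alternant_eq_sum, Pi.add_apply, Finset.mul_sum]
  rw [Finset.sum_comm]
  refine Finset.sum_congr rfl fun π _ => ?_
  rw [← Finset.smul_sum, hshift, mul_smul_comm, mul_comm]

def indicatorExponents (T : Finset (Fin r)) : Fin r → ℕ := fun i => if i ∈ T then 1 else 0

lemma indicatorExponents_injective : Function.Injective (indicatorExponents (r := r)) := by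
  intro T T' h
  ext i
  have hi := congrFun h i
  unfold indicatorExponents at hi
  split_ifs at hi <;> simp_all

lemma esymm_eq_sum_prod_X_pow (k : ℕ) :
    esymm (Fin r) ℚ k = ∑ c ∈ (Finset.univ.powersetCard k).image indicatorExponents,
      ∏ i, (X i : Pol r) ^ c i := by
  rw [Finset.sum_image fun _ _ _ _ h => indicatorExponents_injective h]
  refine Finset.sum_congr rfl fun T _ => ?_
  simp [indicatorExponents, pow_ite, Finset.prod_ite_mem]

lemma indicatorExponents_comp_perm (T : Finset (Fin r)) (π : Equiv.Perm (Fin r)) :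
    indicatorExponents T ∘ π = indicatorExponents (T.map π.symm.toEmbedding) := by
  ext i
  simp [indicatorExponents, Finset.mem_map_equiv]

lemma esymm_mul_alternant (k : ℕ) (a : Fin r → ℕ) :
    esymm (Fin r) ℚ k * alternant a =
      ∑ T ∈ Finset.univ.powersetCard k, alternant (a + indicatorExponents T) := by
  rw [esymm_eq_sum_prod_X_pow, sum_prod_X_pow_mul_alternant,
    Finset.sum_image fun _ _ _ _ h => indicatorExponents_injective h]
  simp only [Finset.mem_image, Finset.mem_powersetCard]
  rintro _ ⟨T, hT, rfl⟩ π
  exact ⟨_, ⟨Finset.subset_univ _, by simpa using hT.2⟩, (indicatorExponents_comp_perm T π).symm⟩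

end Alternant

lemma PowerSeries.one_sub_C_mul_X_mul_mk_pow {R : Type*} [CommRing R] (x : R) :
    (1 - C x * X) * mk (x ^ ·) = 1 := by
  have h := congrArg (rescale x) (mk_one_mul_one_sub_eq_one R)
  rw [map_mul, map_sub, map_one, rescale_X, rescale_mk] at h
  rw [mul_comm]
  simpa only [Pi.one_apply, mul_one] using h

section SymmetricSeries

variable {r : ℕ}

def eSeries (S : Finset (Fin r)) : PowerSeries (Pol r) :=
  ∏ i ∈ S, (1 - PowerSeries.C (X i) * PowerSeries.X)

def hSeries (r : ℕ) : PowerSeries (Pol r) :=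
  ∏ i, PowerSeries.mk fun n => (X i : Pol r) ^ n

lemma eSeries_mul_hSeries : eSeries Finset.univ * hSeries r = 1 := by
  rw [eSeries, hSeries, ← Finset.prod_mul_distrib]
  exact Finset.prod_eq_one fun i _ => PowerSeries.one_sub_C_mul_X_mul_mk_pow _

lemma coeff_eSeries (S : Finset (Fin r)) (n : ℕ) :
    PowerSeries.coeff n (eSeries S) =
      (-1) ^ n * ∑ T ∈ S.powersetCard n, ∏ i ∈ T, (X i : Pol r) := by
  have hexp : eSeries S = ∑ T ∈ S.powerset,
      PowerSeries.C ((-1) ^ T.card * ∏ i ∈ T, (X i : Pol r)) * PowerSeries.X ^ T.card := by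
    simp only [eSeries, sub_eq_neg_add, Finset.prod_add, Finset.prod_const_one, mul_one,
      ← neg_mul, Finset.prod_mul_distrib, Finset.prod_const, map_mul, map_prod, map_pow,
      map_neg, map_one, Finset.prod_neg]
  simp only [hexp, map_sum, PowerSeries.coeff_C_mul_X_pow, Finset.powersetCard_eq_filter,
    Finset.sum_filter, Finset.mul_sum]
  refine Finset.sum_congr rfl fun T _ => ?_
  rcases eq_or_ne T.card n with h | h
  · simp [h]
  · simp [h, h.symm]

lemma coeff_eSeries_eq_zero {S : Finset (Fin r)} {n : ℕ} (hn : S.card < n) :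
    PowerSeries.coeff n (eSeries S) = 0 := by
  rw [coeff_eSeries, Finset.powersetCard_eq_empty.2 hn, Finset.sum_empty, mul_zero]

lemma eSeries_erase_mul_hSeries (t : Fin r) :
    eSeries (Finset.univ.erase t) * hSeries r = PowerSeries.mk ((X t : Pol r) ^ ·) := by
  have hunit := PowerSeries.one_sub_C_mul_X_mul_mk_pow (X t : Pol r)
  refine (IsUnit.of_mul_eq_one _ hunit).mul_left_cancel ?_
  rw [hunit, ← mul_assoc, eSeries,
    Finset.mul_prod_erase _ (fun i => 1 - PowerSeries.C (X i) * PowerSeries.X) (Finset.mem_univ t)]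
  exact eSeries_mul_hSeries

/-- `h_m(x₁, …, x_r)`, extended by `0` to negative `m`. -/
def hPoly (r : ℕ) (m : ℤ) : Pol r :=
  if m < 0 then 0 else PowerSeries.coeff m.toNat (hSeries r)

lemma hPoly_of_neg {m : ℤ} (hm : m < 0) : hPoly r m = 0 := if_pos hm

lemma hPoly_natCast (k : ℕ) : hPoly r k = PowerSeries.coeff k (hSeries r) := by
  simp [hPoly]

lemma hPoly_zero : hPoly r 0 = 1 := by
  rw [← Nat.cast_zero, hPoly_natCast, PowerSeries.coeff_zero_eq_constantCoeff_apply, hSeries,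
    map_prod]
  simp

lemma hPoly_natCast_eq_sum (k : ℕ) :
    hPoly r k = ∑ c ∈ Finset.Nat.antidiagonalTuple r k, ∏ i, (X i : Pol r) ^ c i := by
  rw [hPoly_natCast, hSeries, PowerSeries.coeff_prod]
  refine Finset.sum_nbij' (⇑) Finsupp.equivFunOnFinite.symm ?_ ?_ (fun _ _ => by simp)
    (fun _ _ => rfl) fun _ _ => by simp
  · intro c hc
    exact Finset.Nat.mem_antidiagonalTuple.2 (Finset.mem_finsuppAntidiag.1 hc).1
  · intro c hc
    simpa [Finset.mem_finsuppAntidiag] using Finset.Nat.mem_antidiagonalTuple.1 hc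

lemma sum_coeff_eSeries_erase_mul_hPoly (t : Fin r) (m : ℕ) :
    ∑ i : Fin r, PowerSeries.coeff i (eSeries (Finset.univ.erase t)) * hPoly r (m - i) =
      X t ^ m := by
  set F : ℕ → Pol r := fun p => PowerSeries.coeff p (eSeries (Finset.univ.erase t)) *
    hPoly r (m - p)
  have hcard : (Finset.univ.erase t).card = r - 1 := by simp
  have hlow : ∑ p ∈ Finset.range r, F p = ∑ p ∈ Finset.range (r + (m + 1)), F p :=
    Finset.sum_subset (Finset.range_subset_range.2 (by omega)) fun p _ hp => by
      rw [Finset.mem_range, not_lt] at hp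
      simp only [F]
      rw [coeff_eSeries_eq_zero (by rw [hcard]; have := t.pos; omega), zero_mul]
  have hhigh : ∑ p ∈ Finset.range (m + 1), F p = ∑ p ∈ Finset.range (r + (m + 1)), F p :=
    Finset.sum_subset (Finset.range_subset_range.2 (by omega)) fun p _ hp => by
      rw [Finset.mem_range, not_lt] at hp
      simp only [F]
      rw [hPoly_of_neg (m := (m : ℤ) - p) (by omega), mul_zero]
  -- The convolution for the coefficient of `z^m` runs over `p ≤ m`, the claimed sum over
  -- `p < r`; both extend by zeros to `p < r + m + 1`.
  have hcoeff := congrArg (PowerSeries.coeff m) (eSeries_erase_mul_hSeries t)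
  rw [PowerSeries.coeff_mul, Finset.Nat.sum_antidiagonal_eq_sum_range_succ_mk,
    PowerSeries.coeff_mk] at hcoeff
  rw [Fin.sum_univ_eq_sum_range F, hlow, ← hhigh, ← hcoeff]
  refine Finset.sum_congr rfl fun p hp => ?_
  rw [Finset.mem_range] at hp
  simp only [F, ← hPoly_natCast, Nat.cast_sub (by omega : p ≤ m)]

end SymmetricSeries

section JacobiTrudi

variable {r : ℕ}

def delta (r : ℕ) : Fin r → ℕ := fun j => r - 1 - j

def hMatrix (l : Fin r → ℕ) : Matrix (Fin r) (Fin r) (Pol r) :=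
  Matrix.of fun j i => hPoly r ((l j : ℤ) + i - j)

def eMatrix (r : ℕ) : Matrix (Fin r) (Fin r) (Pol r) :=
  Matrix.of fun i t => PowerSeries.coeff (r - 1 - i) (eSeries (Finset.univ.erase t))

lemma hMatrix_mul_eMatrix (l : Fin r → ℕ) :
    hMatrix l * eMatrix r = Matrix.of fun j t => (X t : Pol r) ^ (delta r + l) j := by
  refine Matrix.ext fun j t => ?_
  rw [Matrix.mul_apply, Matrix.of_apply, Pi.add_apply,
    ← sum_coeff_eSeries_erase_mul_hPoly t (delta r j + l j)]
  refine Fintype.sum_equiv (M := Pol r) Fin.revPerm _ _ fun i => ?_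
  have hi := i.isLt
  have hj := j.isLt
  simp only [hMatrix, eMatrix, delta, Matrix.of_apply, Fin.revPerm_apply, Fin.val_rev]
  rw [mul_comm, show r - (i.val + 1) = r - 1 - i by omega]
  congr 2
  omega

lemma det_hMatrix_zero : (hMatrix (0 : Fin r → ℕ)).det = 1 := by
  rw [Matrix.det_of_isUpperTriangular]
  · simp [hMatrix, hPoly_zero]
  · intro j i hij
    exact hPoly_of_neg (by simp only [Pi.zero_apply]; have : (i : ℕ) < j := hij; omega)

lemma det_eMatrix : (eMatrix r).det = alternant (delta r) := by
  have h := congrArg Matrix.det (hMatrix_mul_eMatrix (0 : Fin r → ℕ))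
  rwa [Matrix.det_mul, det_hMatrix_zero, one_mul, add_zero] at h

lemma alternant_delta_add (l : Fin r → ℕ) :
    alternant (delta r + l) = (hMatrix l).det * alternant (delta r) := by
  rw [← det_eMatrix, ← Matrix.det_mul, hMatrix_mul_eMatrix]
  rfl

end JacobiTrudi

section EvalEsymm

variable {r : ℕ}

def evalEsymm (r : ℕ) : Br r →ₐ[ℚ] Pol r :=
  aeval fun i : Fin r => esymm (Fin r) ℚ (i + 1)

lemma evalEsymm_injective : Function.Injective (evalEsymm r) := by
  intro p q hpq
  refine esymmAlgHom_injective (σ := Fin r) ℚ (n := r) (by rw [Fintype.card_fin]) ?_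
  exact Subtype.ext (by rw [esymmAlgHom_apply, esymmAlgHom_apply]; exact hpq)

lemma evalEsymm_eP (n : ℕ) : evalEsymm r (eP r n) = esymm (Fin r) ℚ n := by
  unfold eP
  split_ifs with h1 h2
  · rw [evalEsymm, aeval_X]
    congr 1
    show n - 1 + 1 = n
    omega
  · rw [h2, map_one, esymm_zero]
  · rw [map_zero, esymm, Finset.powersetCard_eq_empty.2
      (by simp only [Finset.card_univ, Fintype.card_fin]; omega), Finset.sum_empty]

lemma map_Er : PowerSeries.map (evalEsymm r).toRingHom (Er r) = eSeries Finset.univ := by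
  ext n
  rw [PowerSeries.coeff_map, Er, PowerSeries.coeff_mk, coeff_eSeries]
  simp [evalEsymm_eP, esymm]

lemma map_invOfUnit_Er :
    PowerSeries.map (evalEsymm r).toRingHom (PowerSeries.invOfUnit (Er r) 1) = hSeries r := by
  refine left_inv_eq_right_inv (a := eSeries Finset.univ) ?_ eSeries_mul_hSeries
  rw [← map_Er, ← map_mul, PowerSeries.invOfUnit_mul, map_one]
  simp [Er, eP]

lemma evalEsymm_hP (m : ℤ) : evalEsymm r (hP r m) = hPoly r m := by
  unfold hP hPoly
  split_ifs
  · exact map_zero _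
  · rw [← map_invOfUnit_Er, PowerSeries.coeff_map]
    rfl

lemma evalEsymm_Delta (l : Fin r → ℕ) : evalEsymm r (Delta r l) = (hMatrix l).det := by
  rw [Delta, AlgHom.map_det, ← Matrix.det_transpose (hMatrix l)]
  congr 1
  ext i j : 1
  simp only [AlgHom.mapMatrix_apply, Matrix.map_apply, Matrix.of_apply, evalEsymm_hP,
    Matrix.transpose_apply, hMatrix]
  congr 1
  ring

theorem alternant_delta_add_eq_evalEsymm_Delta_mul (l : Fin r → ℕ) :
    alternant (delta r + l) = evalEsymm r (Delta r l) * alternant (delta r) := by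
  rw [evalEsymm_Delta, alternant_delta_add]

end EvalEsymm

abbrev ΛV : Type := ExteriorAlgebra ℚ V

section AlternantMap

variable {r : ℕ}

def wedge (a : Fin r → ℕ) : ΛV :=
  ExteriorAlgebra.ιMulti ℚ r fun k => Finsupp.single (a k) 1

lemma wedge_eq_prod_ofFn (a : Fin r → ℕ) : wedge a = (List.ofFn fun k => Xp (a k)).prod :=
  ExteriorAlgebra.ιMulti_apply _

lemma Xr_eq_wedge (l : Fin r → ℕ) : Xr r l = wedge (delta r + l) := by
  rw [wedge_eq_prod_ofFn, List.ofFn_eq_map]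
  rfl

lemma wedge_mem_exteriorPower (a : Fin r → ℕ) : wedge a ∈ ⋀[ℚ]^r V :=
  ExteriorAlgebra.ιMulti_range ℚ r ⟨_, rfl⟩

def detAlternating (r : ℕ) : (Fin r → Pol r) [⋀^Fin r]→ₗ[ℚ] Pol r :=
  { Matrix.detRowAlternating.toMultilinearMap.restrictScalars ℚ with
    map_eq_zero_of_eq' := fun v _ _ h hij => Matrix.detRowAlternating.map_eq_zero_of_eq v h hij }

def powersOfX (r : ℕ) : V →ₗ[ℚ] Fin r → Pol r :=
  LinearMap.pi fun i => Finsupp.linearCombination ℚ ((X i : Pol r) ^ ·)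

def alternantMap (r : ℕ) : ΛV →ₗ[ℚ] Pol r :=
  ExteriorAlgebra.liftAlternating (Pi.single r ((detAlternating r).compLinearMap (powersOfX r)))

lemma alternantMap_wedge (a : Fin r → ℕ) : alternantMap r (wedge a) = alternant a := by
  rw [alternantMap, wedge, ExteriorAlgebra.liftAlternating_apply_ιMulti, Pi.single_eq_same]
  change Matrix.det (Matrix.of fun k i => _) = _
  simp [alternant]

end AlternantMap

section Injectivity

variable {r : ℕ}

abbrev wedgeBasis (r : ℕ) : Module.Basis (Set.powersetCard ℕ r) ℚ (⋀[ℚ]^r V) :=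
  Finsupp.basisSingleOne.exteriorPower r

def basisExponents (s : Set.powersetCard ℕ r) : Fin r → ℕ :=
  Set.powersetCard.ofFinEmbEquiv.symm s

lemma basisExponents_strictMono (s : Set.powersetCard ℕ r) : StrictMono (basisExponents s) :=
  (Set.powersetCard.ofFinEmbEquiv.symm s).strictMono

lemma basisExponents_injective : Function.Injective (basisExponents (r := r)) :=
  fun _ _ h => Set.powersetCard.ofFinEmbEquiv.symm.injective (DFunLike.coe_injective h)

lemma ιMulti_family_basisSingleOne (s : Set.powersetCard ℕ r) :
    ExteriorAlgebra.ιMulti_family ℚ r Finsupp.basisSingleOne s = wedge (basisExponents s) := by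
  simp [wedge, basisExponents, ExteriorAlgebra.ιMulti_family, Function.comp_def]

lemma coe_wedgeBasis (s : Set.powersetCard ℕ r) :
    (wedgeBasis r s : ΛV) = wedge (basisExponents s) := by
  rw [← ιMulti_family_basisSingleOne]
  simp [wedgeBasis]

lemma span_wedge_basisExponents :
    Submodule.span ℚ (Set.range fun s : Set.powersetCard ℕ r => wedge (basisExponents s)) =
      ⋀[ℚ]^r V := by
  simp_rw [← ιMulti_family_basisSingleOne]
  exact exteriorPower.ιMulti_family_span_fixedDegree_of_span ℚ Finsupp.basisSingleOne.span_eq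

lemma coeff_alternantMap_comp_subtype (s : Set.powersetCard ℕ r) :
    lcoeff ℚ (Finsupp.equivFunOnFinite.symm (basisExponents s)) ∘ₗ
        (alternantMap r ∘ₗ (⋀[ℚ]^r V).subtype) =
      (wedgeBasis r).coord s := by
  refine (wedgeBasis r).ext fun t => ?_
  rw [LinearMap.comp_apply, LinearMap.comp_apply, Submodule.subtype_apply, coe_wedgeBasis,
    lcoeff_apply, alternantMap_wedge,
    coeff_alternant (basisExponents_strictMono t) (basisExponents_strictMono s),
    Module.Basis.coord_apply, Module.Basis.repr_self, Finsupp.single_apply]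
  simp [basisExponents_injective.eq_iff]

lemma alternantMap_injOn_exteriorPower {u : ΛV} (hu : u ∈ ⋀[ℚ]^r V)
    (h : alternantMap r u = 0) : u = 0 := by
  suffices (wedgeBasis r).repr ⟨u, hu⟩ = 0 by simpa using this
  ext s
  rw [← Module.Basis.coord_apply, ← coeff_alternantMap_comp_subtype]
  simp [h]

end Injectivity

lemma Finset.Nat.sum_antidiagonalTuple_succ {M : Type*} [AddCommMonoid M] (n k : ℕ)
    (g : (Fin (n + 1) → ℕ) → M) :
    ∑ c ∈ antidiagonalTuple (n + 1) k, g c =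
      ∑ p ∈ antidiagonal k, ∑ c ∈ antidiagonalTuple n p.2, g (Fin.cons p.1 c) := by
  rw [Finset.sum_sigma']
  refine (Finset.sum_nbij'
    (fun x : Σ _ : ℕ × ℕ, Fin n → ℕ => (Fin.cons x.1.1 x.2 : Fin (n + 1) → ℕ))
    (fun c => ⟨(c 0, ∑ i, Fin.tail c i), Fin.tail c⟩) ?_ ?_ ?_ ?_ fun _ _ => rfl).symm
  · rintro ⟨⟨p₁, p₂⟩, c⟩ hx
    simp only [Finset.mem_sigma, HasAntidiagonal.mem_antidiagonal, mem_antidiagonalTuple] at hx ⊢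
    rw [Fin.sum_cons]
    omega
  · intro c hc
    rw [mem_antidiagonalTuple, Fin.sum_univ_succ] at hc
    simpa [Fin.tail, mem_antidiagonalTuple] using hc
  · rintro ⟨⟨p₁, p₂⟩, c⟩ hx
    simp only [Finset.mem_sigma, mem_antidiagonalTuple] at hx
    simp [hx.2]
  · exact fun c _ => Fin.cons_self_tail c

section SchubertDerivation

variable {r : ℕ} (σp : ΛV →+* PowerSeries ΛV)

lemma map_prod_ofFn_Xp (hσp : ∀ j, σp (Xp j) = PowerSeries.mk fun i => Xp (j + i)) {n : ℕ}
    (a : Fin n → ℕ) :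
    σp (List.ofFn fun i => Xp (a i)).prod = PowerSeries.mk fun k =>
      ∑ c ∈ Finset.Nat.antidiagonalTuple n k, (List.ofFn fun i => Xp (a i + c i)).prod := by
  induction n with
  | zero =>
    ext k
    cases k <;> simp
  | succ n ih =>
    ext k
    rw [List.ofFn_succ, List.prod_cons, map_mul, hσp, ih, PowerSeries.coeff_mul,
      PowerSeries.coeff_mk, Finset.Nat.sum_antidiagonalTuple_succ]
    refine Finset.sum_congr rfl fun p _ => ?_
    simp [Finset.mul_sum, List.ofFn_succ]

lemma opOf_natCast_wedge (hσp : ∀ j, σp (Xp j) = PowerSeries.mk fun i => Xp (j + i))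
    (k : ℕ) (a : Fin r → ℕ) :
    opOf σp k (wedge a) = ∑ c ∈ Finset.Nat.antidiagonalTuple r k, wedge (a + c) := by
  simp [opOf, wedge_eq_prod_ofFn, map_prod_ofFn_Xp σp hσp]

lemma opOf_of_neg {m : ℤ} (hm : m < 0) (u : ΛV) : opOf σp m u = 0 :=
  dif_neg (not_le.2 hm)

def opOfLinear (m : ℤ) : ΛV →ₗ[ℚ] ΛV where
  toFun := opOf σp m
  map_add' u v := by unfold opOf; split_ifs <;> simp
  map_smul' q u := by unfold opOf; split_ifs <;> simp [map_rat_smul σp]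

lemma opOf_wedge_mem (hσp : ∀ j, σp (Xp j) = PowerSeries.mk fun i => Xp (j + i))
    (m : ℤ) (a : Fin r → ℕ) : opOf σp m (wedge a) ∈ ⋀[ℚ]^r V := by
  rcases lt_or_ge m 0 with hm | hm
  · rw [opOf_of_neg σp hm]
    exact zero_mem _
  · lift m to ℕ using hm
    rw [opOf_natCast_wedge σp hσp]
    exact sum_mem fun c _ => wedge_mem_exteriorPower _

lemma alternantMap_opOf_wedge (hσp : ∀ j, σp (Xp j) = PowerSeries.mk fun i => Xp (j + i))
    (m : ℤ) (a : Fin r → ℕ) :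
    alternantMap r (opOf σp m (wedge a)) = hPoly r m * alternant a := by
  rcases lt_or_ge m 0 with hm | hm
  · rw [opOf_of_neg σp hm, hPoly_of_neg hm, map_zero, zero_mul]
  · lift m to ℕ using hm
    have hperm : ∀ c ∈ Finset.Nat.antidiagonalTuple r m, ∀ π : Equiv.Perm (Fin r),
        c ∘ π ∈ Finset.Nat.antidiagonalTuple r m := by
      simp [Finset.Nat.mem_antidiagonalTuple, Equiv.sum_comp]
    simp only [opOf_natCast_wedge σp hσp, map_sum, alternantMap_wedge, hPoly_natCast_eq_sum,
      sum_prod_X_pow_mul_alternant hperm]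

lemma opOf_mem_exteriorPower (hσp : ∀ j, σp (Xp j) = PowerSeries.mk fun i => Xp (j + i))
    (m : ℤ) {u : ΛV} (hu : u ∈ ⋀[ℚ]^r V) : opOf σp m u ∈ ⋀[ℚ]^r V := by
  rw [← span_wedge_basisExponents] at hu
  refine (Submodule.span_le (p := (⋀[ℚ]^r V).comap (opOfLinear σp m))).2 ?_ hu
  rintro _ ⟨s, rfl⟩
  exact opOf_wedge_mem σp hσp m _

lemma alternantMap_opOf (hσp : ∀ j, σp (Xp j) = PowerSeries.mk fun i => Xp (j + i))
    (m : ℤ) {u : ΛV} (hu : u ∈ ⋀[ℚ]^r V) :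
    alternantMap r (opOf σp m u) = hPoly r m * alternantMap r u := by
  rw [← span_wedge_basisExponents] at hu
  refine LinearMap.eqOn_span' (f := alternantMap r ∘ₗ opOfLinear σp m)
    (g := LinearMap.mulLeft ℚ (hPoly r m) ∘ₗ alternantMap r) ?_ hu
  rintro _ ⟨s, rfl⟩
  exact (alternantMap_opOf_wedge σp hσp m _).trans (by simp [alternantMap_wedge])

end SchubertDerivation

section GiambelliOperator

variable {r : ℕ} (σp : ΛV →+* PowerSeries ΛV)

lemma foldr_opOf_mem (hσp : ∀ j, σp (Xp j) = PowerSeries.mk fun i => Xp (j + i)) {ι : Type*}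
    (k : ι → ℤ) (L : List ι) {u : ΛV} (hu : u ∈ ⋀[ℚ]^r V) :
    L.foldr (fun j f => opOf σp (k j) ∘ f) id u ∈ ⋀[ℚ]^r V := by
  induction L with
  | nil => exact hu
  | cons j L ih => exact opOf_mem_exteriorPower σp hσp _ ih

lemma alternantMap_foldr_opOf (hσp : ∀ j, σp (Xp j) = PowerSeries.mk fun i => Xp (j + i))
    {ι : Type*} (k : ι → ℤ) (L : List ι) {u : ΛV} (hu : u ∈ ⋀[ℚ]^r V) :
    alternantMap r (L.foldr (fun j f => opOf σp (k j) ∘ f) id u) =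
      (L.map fun j => hPoly r (k j)).prod * alternantMap r u := by
  induction L with
  | nil => simp
  | cons j L ih =>
    rw [List.foldr_cons, Function.comp_apply,
      alternantMap_opOf σp hσp _ (foldr_opOf_mem σp hσp k L hu), ih, List.map_cons,
      List.prod_cons, mul_assoc]

lemma giambelli_mem (hσp : ∀ j, σp (Xp j) = PowerSeries.mk fun i => Xp (j + i))
    (l : Fin r → ℕ) {u : ΛV} (hu : u ∈ ⋀[ℚ]^r V) : giambelli σp r l u ∈ ⋀[ℚ]^r V :=
  sum_mem fun _ _ => zsmul_mem (foldr_opOf_mem σp hσp _ _ hu) _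

lemma alternantMap_giambelli (hσp : ∀ j, σp (Xp j) = PowerSeries.mk fun i => Xp (j + i))
    (l : Fin r → ℕ) {u : ΛV} (hu : u ∈ ⋀[ℚ]^r V) :
    alternantMap r (giambelli σp r l u) = evalEsymm r (Delta r l) * alternantMap r u := by
  rw [evalEsymm_Delta, ← Matrix.det_transpose, Matrix.det_apply, Finset.sum_mul, giambelli,
    map_sum]
  refine Finset.sum_congr rfl fun π _ => ?_
  rw [map_zsmul, alternantMap_foldr_opOf σp hσp _ _ hu, ← List.ofFn_eq_map, List.prod_ofFn,
    Units.smul_def, smul_mul_assoc]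
  congr 2
  refine Finset.prod_congr rfl fun j _ => ?_
  simp only [Matrix.transpose_apply, hMatrix, Matrix.of_apply]
  congr 1
  ring

lemma eq_giambelli_of_alternantMap_eq
    (hσp : ∀ j, σp (Xp j) = PowerSeries.mk fun i => Xp (j + i)) (l : Fin r → ℕ) {x : ΛV}
    (hx : x ∈ ⋀[ℚ]^r V) (h : alternantMap r x = evalEsymm r (Delta r l) * alternant (delta r)) :
    x = giambelli σp r l (Xr r fun _ => 0) := by
  rw [show (Xr r fun _ => 0) = wedge (delta r) from Xr_eq_wedge _]
  have hmem := wedge_mem_exteriorPower (delta r)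
  refine sub_eq_zero.1 (alternantMap_injOn_exteriorPower
    (sub_mem hx (giambelli_mem σp hσp l hmem)) ?_)
  rw [map_sub, h, alternantMap_giambelli σp hσp l hmem, alternantMap_wedge, sub_self]

end GiambelliOperator

section FreeModule

variable {r : ℕ}

lemma StrictMono.val_le_apply {n : ℕ} {a : Fin n → ℕ} (ha : StrictMono a) (i : Fin n) :
    (i : ℕ) ≤ a i := by
  suffices ∀ i (hi : i < n), i ≤ a ⟨i, hi⟩ from this i i.isLt
  intro i
  induction i with
  | zero => exact fun _ => Nat.zero_le _
  | succ i ih =>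
    intro hi
    have := ha (show (⟨i, by omega⟩ : Fin n) < ⟨i + 1, hi⟩ from Nat.lt_succ_self i)
    have := ih (by omega)
    omega

lemma delta_eq_comp_revPerm : delta r = (fun j : Fin r => (j : ℕ)) ∘ Fin.revPerm := by
  ext j
  simp only [delta, Function.comp_apply, Fin.revPerm_apply, Fin.val_rev]
  omega

lemma alternant_delta_ne_zero : alternant (delta r) ≠ 0 := by
  rw [delta_eq_comp_revPerm, alternant_comp_perm, smul_ne_zero_iff_ne]
  intro h
  have hcoeff := coeff_alternant (Fin.val_strictMono (n := r)) Fin.val_strictMono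
  rw [h, coeff_zero, if_pos rfl] at hcoeff
  exact zero_ne_one hcoeff

lemma exists_comp_revPerm_eq_delta_add {a : Fin r → ℕ} (ha : StrictMono a) :
    ∃ l : Fin r → ℕ, a = (delta r + l) ∘ Fin.revPerm := by
  refine ⟨fun j => a (Fin.rev j) - delta r j, funext fun j => ?_⟩
  have := ha.val_le_apply j
  simp only [delta, Function.comp_apply, Fin.revPerm_apply, Pi.add_apply, Fin.val_rev,
    Fin.rev_rev]
  omega

def evalEsymmMulDelta (r : ℕ) : Br r →ₗ[ℚ] Pol r :=
  LinearMap.mulRight ℚ (alternant (delta r)) ∘ₗ (evalEsymm r).toLinearMap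

lemma evalEsymmMulDelta_apply (p : Br r) :
    evalEsymmMulDelta r p = evalEsymm r p * alternant (delta r) := rfl

lemma evalEsymmMulDelta_injective : Function.Injective (evalEsymmMulDelta r) :=
  fun _ _ h => evalEsymm_injective (mul_right_cancel₀ alternant_delta_ne_zero h)

lemma alternant_mem_map_alternantMap (a : Fin r → ℕ) :
    alternant a ∈ (⋀[ℚ]^r V).map (alternantMap r) :=
  ⟨wedge a, wedge_mem_exteriorPower a, alternantMap_wedge a⟩

lemma map_alternantMap_eq_span :
    (⋀[ℚ]^r V).map (alternantMap r) =
      Submodule.span ℚ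
        (Set.range fun s : Set.powersetCard ℕ r => alternant (basisExponents s)) := by
  rw [← span_wedge_basisExponents, Submodule.map_span, ← Set.range_comp]
  simp [Function.comp_def, alternantMap_wedge]

lemma esymm_mul_mem_map_alternantMap (k : ℕ) {y : Pol r}
    (hy : y ∈ (⋀[ℚ]^r V).map (alternantMap r)) :
    esymm (Fin r) ℚ k * y ∈ (⋀[ℚ]^r V).map (alternantMap r) := by
  rw [map_alternantMap_eq_span] at hy
  refine (Submodule.span_le (p := ((⋀[ℚ]^r V).map (alternantMap r)).comap
    (LinearMap.mulLeft ℚ (esymm (Fin r) ℚ k)))).2 ?_ hy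
  rintro _ ⟨s, rfl⟩
  simp only [SetLike.mem_coe, Submodule.mem_comap, LinearMap.mulLeft_apply, esymm_mul_alternant]
  exact sum_mem fun T _ => alternant_mem_map_alternantMap _

lemma range_evalEsymmMulDelta :
    LinearMap.range (evalEsymmMulDelta r) = (⋀[ℚ]^r V).map (alternantMap r) := by
  refine le_antisymm ?_ ?_
  · rintro _ ⟨p, rfl⟩
    induction p using MvPolynomial.induction_on with
    | C q =>
      rw [evalEsymmMulDelta_apply, evalEsymm, aeval_C, algebraMap_eq, C_mul']
      exact Submodule.smul_mem _ q (alternant_mem_map_alternantMap _)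
    | add p q hp hq =>
      rw [map_add]
      exact add_mem hp hq
    | mul_X p i hp =>
      rw [evalEsymmMulDelta_apply, map_mul, evalEsymm, aeval_X, mul_right_comm, mul_comm]
      exact esymm_mul_mem_map_alternantMap _ hp
  · rw [map_alternantMap_eq_span, Submodule.span_le]
    rintro _ ⟨s, rfl⟩
    obtain ⟨l, hl⟩ := exists_comp_revPerm_eq_delta_add (basisExponents_strictMono s)
    refine ⟨Equiv.Perm.sign (Fin.revPerm : Equiv.Perm (Fin r)) • Delta r l, ?_⟩
    show _ = alternant (basisExponents s)
    rw [hl, alternant_comp_perm, alternant_delta_add_eq_evalEsymm_Delta_mul, Units.smul_def,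
      Units.smul_def, map_zsmul, evalEsymmMulDelta_apply]

def alternantMapRestrict (r : ℕ) : ⋀[ℚ]^r V →ₗ[ℚ] Pol r :=
  alternantMap r ∘ₗ (⋀[ℚ]^r V).subtype

lemma alternantMapRestrict_injective : Function.Injective (alternantMapRestrict r) :=
  (injective_iff_map_eq_zero _).2 fun u hu =>
    Subtype.ext (alternantMap_injOn_exteriorPower u.2 hu)

lemma range_alternantMapRestrict :
    LinearMap.range (alternantMapRestrict r) = (⋀[ℚ]^r V).map (alternantMap r) := by
  rw [alternantMapRestrict, LinearMap.range_comp, Submodule.range_subtype]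

def brEquivExteriorPower (r : ℕ) : Br r ≃ₗ[ℚ] ⋀[ℚ]^r V :=
  (LinearEquiv.ofInjective _ evalEsymmMulDelta_injective).trans <|
    (LinearEquiv.ofEq _ _ (range_evalEsymmMulDelta.trans range_alternantMapRestrict.symm)).trans
      (LinearEquiv.ofInjective _ alternantMapRestrict_injective).symm

lemma alternantMap_brEquivExteriorPower (p : Br r) :
    alternantMap r (brEquivExteriorPower r p) = evalEsymm r p * alternant (delta r) :=
  LinearEquiv.ofInjective_symm_apply (alternantMapRestrict r)
    (h := alternantMapRestrict_injective) _

end FreeModule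

/-- Giambelli's formula for Schubert derivations: if `σ₊(z)` is the Hasse–Schmidt
derivation with `σ₊(z)X^j = ∑_{i≥0}X^{j+i}z^i` and `σ₊(z) = ∑ σ_i z^i`, then for every
partition `λ` of length at most `r`, `X^r(λ) = det(σ_{λ_j−j+i})·X^r(0)`.
Consequently `⋀^r V` is a free `B_r`-module of rank `1` generated by
`X^r(0)` (where `h_i` acts as `σ_i`): the map `Δ_λ(H_r) ↦ Δ_λ(σ)X^r(0) = X^r(λ)`
extends to a linear isomorphism `B_r ≃ ⋀^r V`. -/
theorem giambelli_formula (r : ℕ)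
    (σp : ExteriorAlgebra ℚ V →+* PowerSeries (ExteriorAlgebra ℚ V))
    (hσp : ∀ j, σp (Xp j) = PowerSeries.mk fun i => Xp (j + i)) :
    (∀ l : Fin r → ℕ, Antitone l →
      Xr r l = giambelli σp r l (Xr r fun _ => 0)) ∧
    (∃ e : Br r ≃ₗ[ℚ] ⋀[ℚ]^r V,
      ∀ l : Fin r → ℕ, Antitone l →
        (e (Delta r l) : ExteriorAlgebra ℚ V) = giambelli σp r l (Xr r fun _ => 0)) := by
  refine ⟨fun l _ => ?_, brEquivExteriorPower r, fun l _ => ?_⟩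
  · refine eq_giambelli_of_alternantMap_eq σp hσp l ?_ ?_
    · rw [Xr_eq_wedge]
      exact wedge_mem_exteriorPower _
    · rw [Xr_eq_wedge, alternantMap_wedge, alternant_delta_add_eq_evalEsymm_Delta_mul]
  · exact eq_giambelli_of_alternantMap_eq σp hσp l (Submodule.coe_mem _)
      (alternantMap_brEquivExteriorPower _)
end
end
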